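/- If P ∈ ℝ[X,Y] satisfies P(X,Y) = −P(Y,X), 2P(X,Y) = P(Y,−X−Y) − P(X,−X−Y), and Y·P(Y,X−Y) + X·P(X,Y−X) = 0, then P is divisible by X·Y·(X+Y)·(X−Y)·(2X+Y)·(X+2Y) in ℝ[X,Y]. -/

import Mathlib

noncomputable section
open MvPolynomial

/-- The polynomial ring `ℝ[X,Y]`. -/
abbrev R2 : Type := MvPolynomial (Fin 2) ℝ

def Xv : R2 := MvPolynomial.X 0
def Yv : R2 := MvPolynomial.X 1

/-- Substitution `P(X,Y) ↦ P(p,q)`. -/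
def subst (p q : R2) (P : R2) : R2 := MvPolynomial.aeval ![p, q] P

/-!
The functional equations force `P` to vanish on the six lines `X = 0`, `Y = 0`, `X = ±Y`,
`Y = -2X`, `X = -2Y`: antisymmetry kills the diagonal, the third equation at `(X, X)` kills
`Y = 0`, the second one at `(-Y, Y)` and `(X, -2X)` kills `X = -Y` and `Y = -2X`, and
antisymmetry carries `Y = 0` and `Y = -2X` to their mirror images `X = 0` and `X = -2Y`.
A linear form `L` divides a polynomial exactly when the polynomial vanishes on the line `L = 0`,
because substituting a parametrisation of that line reduces modulo `L`. So `L` divides a product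
only if it divides a factor, and the six forms, none vanishing identically on the line of
another, divide `P` jointly.
-/

namespace MvPolynomial

variable {σ R : Type*} [CommRing R]

theorem dvd_sub_aeval {L : MvPolynomial σ R} {u : σ → MvPolynomial σ R}
    (hu : ∀ i, L ∣ X i - u i) (P : MvPolynomial σ R) : L ∣ P - aeval u P := by
  induction P using MvPolynomial.induction_on with
  | C a => simp
  | add f g hf hg => simpa only [map_add, add_sub_add_comm] using dvd_add hf hg
  | mul_X f i hf =>
    rw [map_mul, aeval_X,
      show f * X i - aeval u f * u i = (f - aeval u f) * X i + aeval u f * (X i - u i) by ring]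
    exact dvd_add (hf.mul_right _) ((hu i).mul_left _)

theorem dvd_iff_aeval_eq_zero {L : MvPolynomial σ R} {u : σ → MvPolynomial σ R}
    (hu : ∀ i, L ∣ X i - u i) (hL : aeval u L = 0) {P : MvPolynomial σ R} :
    L ∣ P ↔ aeval u P = 0 := by
  refine ⟨fun ⟨Q, hQ⟩ => by rw [hQ, map_mul, hL, zero_mul], fun hP => ?_⟩
  simpa only [hP, sub_zero] using dvd_sub_aeval hu P

theorem mul_dvd_of_aeval_eq_zero [IsDomain R] {L P Q : MvPolynomial σ R}
    {u : σ → MvPolynomial σ R} (hu : ∀ i, L ∣ X i - u i) (hL : aeval u L = 0)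
    (hQP : Q ∣ P) (hP : aeval u P = 0) (hLQ : ¬ L ∣ Q) : Q * L ∣ P := by
  obtain ⟨S, rfl⟩ := hQP
  rw [dvd_iff_aeval_eq_zero hu hL] at hLQ
  rw [map_mul, mul_eq_zero, or_iff_right hLQ, ← dvd_iff_aeval_eq_zero hu hL] at hP
  exact mul_dvd_mul_left Q hP

theorem not_dvd_of_eval {L Q : MvPolynomial σ R} (v : σ → R) (hL : eval v L = 0)
    (hQ : eval v Q ≠ 0) : ¬ L ∣ Q := by
  rintro ⟨S, rfl⟩
  simp [hL] at hQ

end MvPolynomial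

section Substitution

variable (p q : R2)

@[simp] theorem subst_X : subst p q Xv = p := by simp [subst, Xv]
@[simp] theorem subst_Y : subst p q Yv = q := by simp [subst, Yv]

@[simp] theorem subst_add (P Q : R2) : subst p q (P + Q) = subst p q P + subst p q Q :=
  map_add _ P Q
@[simp] theorem subst_sub (P Q : R2) : subst p q (P - Q) = subst p q P - subst p q Q :=
  map_sub _ P Q
@[simp] theorem subst_mul (P Q : R2) : subst p q (P * Q) = subst p q P * subst p q Q :=
  map_mul _ P Q
@[simp] theorem subst_neg (P : R2) : subst p q (-P) = -subst p q P := map_neg _ P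
@[simp] theorem subst_zero : subst p q 0 = 0 := map_zero _
@[simp] theorem subst_ofNat (n : ℕ) [n.AtLeastTwo] :
    subst p q (no_index (OfNat.ofNat n)) = OfNat.ofNat n :=
  map_ofNat _ n

@[simp] theorem subst_subst (a b P : R2) :
    subst a b (subst p q P) = subst (subst a b p) (subst a b q) P := by
  simp only [subst, comp_aeval_apply]
  congr
  funext i
  fin_cases i <;> rfl

end Substitution

section FunctionalEquations

variable {P : R2}

theorem subst_swap_of_antisymm (hanti : subst Yv Xv P = -P) (a b : R2) :
    subst b a P = -subst a b P := by
  simpa using congrArg (subst a b) hanti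

theorem subst_self_eq_zero (hanti : subst Yv Xv P = -P) (a : R2) : subst a a P = 0 :=
  self_eq_neg.mp (subst_swap_of_antisymm hanti a a)

theorem subst_zero_right_eq_zero
    (h2 : Yv * subst Yv (Xv - Yv) P + Xv * subst Xv (Yv - Xv) P = 0) (a : R2) :
    subst a 0 P = 0 := by
  have hX : subst Xv 0 P = 0 := by
    simpa [show Xv ≠ 0 from X_ne_zero 0] using congrArg (subst Xv Xv) h2
  simpa using congrArg (subst a a) hX

theorem subst_zero_left_eq_zero (hanti : subst Yv Xv P = -P)
    (h2 : Yv * subst Yv (Xv - Yv) P + Xv * subst Xv (Yv - Xv) P = 0) (a : R2) :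
    subst 0 a P = 0 := by
  simpa [subst_zero_right_eq_zero h2] using subst_swap_of_antisymm hanti 0 a

theorem subst_neg_self_eq_zero (h1 : 2 * P = subst Yv (-Xv - Yv) P - subst Xv (-Xv - Yv) P)
    (h2 : Yv * subst Yv (Xv - Yv) P + Xv * subst Xv (Yv - Xv) P = 0) (a : R2) :
    subst (-a) a P = 0 := by
  simpa [subst_zero_right_eq_zero h2] using congrArg (subst (-a) a) h1

theorem subst_neg_two_mul_right_eq_zero (hanti : subst Yv Xv P = -P)
    (h1 : 2 * P = subst Yv (-Xv - Yv) P - subst Xv (-Xv - Yv) P) (a : R2) :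
    subst a (-(2 * a)) P = 0 := by
  -- `2 P(a, -2a) = P(-2a, a) - P(a, a) = -P(a, -2a)`
  have h := congrArg (subst a (-(2 * a))) h1
  simp only [subst_mul, subst_ofNat, subst_sub, subst_subst, subst_Y, subst_neg, subst_X,
    sub_neg_eq_add] at h
  rw [show -a + 2 * a = a by ring, subst_self_eq_zero hanti,
    subst_swap_of_antisymm hanti a] at h
  have h3 : (3 : R2) * subst a (-(2 * a)) P = 0 := by linear_combination h
  simpa using h3

theorem subst_neg_two_mul_left_eq_zero (hanti : subst Yv Xv P = -P)
    (h1 : 2 * P = subst Yv (-Xv - Yv) P - subst Xv (-Xv - Yv) P) (a : R2) :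
    subst (-(2 * a)) a P = 0 := by
  simpa [subst_neg_two_mul_right_eq_zero hanti h1 a] using
    subst_swap_of_antisymm hanti a (-(2 * a))

end FunctionalEquations

theorem dvd_iff_subst_eq_zero {L p q P : R2} (hp : L ∣ Xv - p) (hq : L ∣ Yv - q)
    (hL : subst p q L = 0) : L ∣ P ↔ subst p q P = 0 :=
  dvd_iff_aeval_eq_zero (Fin.forall_fin_two.2 ⟨hp, hq⟩) hL

theorem mul_dvd_of_subst_eq_zero {L p q P Q : R2} (hp : L ∣ Xv - p) (hq : L ∣ Yv - q)
    (hL : subst p q L = 0) (hQP : Q ∣ P) (hP : subst p q P = 0) (hLQ : ¬ L ∣ Q) :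
    Q * L ∣ P :=
  mul_dvd_of_aeval_eq_zero (Fin.forall_fin_two.2 ⟨hp, hq⟩) hL hQP hP hLQ

theorem mul_dvd_of_vanishing_on_six_lines {P : R2} (hX : subst 0 Yv P = 0)
    (hY : subst Xv 0 P = 0) (hXaddY : subst (-Yv) Yv P = 0) (hXsubY : subst Yv Yv P = 0)
    (h2XaddY : subst Xv (-(2 * Xv)) P = 0) (hXadd2Y : subst (-(2 * Yv)) Yv P = 0) :
    Xv * Yv * (Xv + Yv) * (Xv - Yv) * (2 * Xv + Yv) * (Xv + 2 * Yv) ∣ P := by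
  have d1 : Xv ∣ P := (dvd_iff_subst_eq_zero (by simp) (by simp) (by simp)).2 hX
  have d2 : Xv * Yv ∣ P := mul_dvd_of_subst_eq_zero (by simp) (by simp) (by simp) d1 hY
    (not_dvd_of_eval ![1, 0] (by simp [Yv]) (by simp [Xv]))
  have d3 : Xv * Yv * (Xv + Yv) ∣ P :=
    mul_dvd_of_subst_eq_zero (by simp) (by simp) (by simp) d2 hXaddY
      (not_dvd_of_eval ![1, -1] (by simp [Xv, Yv]) (by simp [Xv, Yv]))
  have d4 : Xv * Yv * (Xv + Yv) * (Xv - Yv) ∣ P :=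
    mul_dvd_of_subst_eq_zero (by simp) (by simp) (by simp) d3 hXsubY
      (not_dvd_of_eval ![1, 1] (by simp [Xv, Yv]) (by norm_num [Xv, Yv]))
  have d5 : Xv * Yv * (Xv + Yv) * (Xv - Yv) * (2 * Xv + Yv) ∣ P :=
    mul_dvd_of_subst_eq_zero (by simp) (dvd_of_eq (by ring)) (by simp) d4 h2XaddY
      (not_dvd_of_eval ![1, -2] (by norm_num [Xv, Yv]) (by norm_num [Xv, Yv]))
  exact mul_dvd_of_subst_eq_zero (by simp) (by simp) (by simp) d5 hXadd2Y
    (not_dvd_of_eval ![-2, 1] (by norm_num [Xv, Yv]) (by norm_num [Xv, Yv]))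

/-- If `P ∈ ℝ[X,Y]` satisfies `P(X,Y) = −P(Y,X)`,
`2P(X,Y) = P(Y,−X−Y) − P(X,−X−Y)` and `Y·P(Y,X−Y) + X·P(X,Y−X) = 0`, then `P` is
divisible by `X·Y·(X+Y)·(X−Y)·(2X+Y)·(X+2Y)`. -/
theorem divisibility_of_solutions (P : R2)
    (hanti : subst Yv Xv P = -P)
    (h1 : 2 * P = subst Yv (-Xv - Yv) P - subst Xv (-Xv - Yv) P)
    (h2 : Yv * subst Yv (Xv - Yv) P + Xv * subst Xv (Yv - Xv) P = 0) :
    (Xv * Yv * (Xv + Yv) * (Xv - Yv) * (2 * Xv + Yv) * (Xv + 2 * Yv)) ∣ P :=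
  mul_dvd_of_vanishing_on_six_lines (subst_zero_left_eq_zero hanti h2 Yv)
    (subst_zero_right_eq_zero h2 Xv) (subst_neg_self_eq_zero h1 h2 Yv)
    (subst_self_eq_zero hanti Yv)
    (subst_neg_two_mul_right_eq_zero hanti h1 Xv) (subst_neg_two_mul_left_eq_zero hanti h1 Yv)
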